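/- Let P be a poset, V a pointwise finite dimensional persistence module indexed by P, and E a set of nonzero submodules of V. Assume that for each nonzero submodule W of V that is a direct summand of V, there exists a submodule U ∈ E with U contained in W such that U is a direct summand of W. Then there exists a subset A of E giving an internal direct sum decomposition V = ⊕_{U ∈ A} U. -/

import Mathlib

universe u v w w'

/-- A persistence module indexed by a poset `P`, over a field `k`. -/
structure PersMod (k : Type u) [Field k] (P : Type v) [PartialOrder P] :
    Type (max u v (w + 1)) where
  space : P → Type w
  [acg : ∀ x, AddCommGroup (space x)]
  [mod : ∀ x, Module k (space x)]
  map : ∀ {x y : P}, x ≤ y → (space x →ₗ[k] space y)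
  map_id : ∀ x : P, map (le_refl x) = LinearMap.id
  map_comp : ∀ {x y z : P} (hxy : x ≤ y) (hyz : y ≤ z),
    (map hyz).comp (map hxy) = map (hxy.trans hyz)

attribute [instance] PersMod.acg PersMod.mod

variable (k : Type u) [Field k] {P : Type v} [PartialOrder P]

/-- A morphism of persistence modules (a natural transformation). -/
structure PersHom (V : PersMod.{u, v, w} k P) (W : PersMod.{u, v, w'} k P) where
  app : ∀ x : P, V.space x →ₗ[k] W.space x
  natural : ∀ {x y : P} (h : x ≤ y) (v : V.space x),
    app y (V.map h v) = W.map h (app x v)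

/-- An isomorphism of persistence modules. -/
structure PersIso (V : PersMod.{u, v, w} k P) (W : PersMod.{u, v, w'} k P) where
  app : ∀ x : P, V.space x ≃ₗ[k] W.space x
  natural : ∀ {x y : P} (h : x ≤ y) (v : V.space x),
    app y (V.map h v) = W.map h (app x v)

/-- A subset `I` of a poset is convex if `x ≤ y ≤ z`, `x ∈ I`, `z ∈ I` imply `y ∈ I`. -/
def IsConvexIn (I : Set P) : Prop :=
  ∀ ⦃x y z : P⦄, x ∈ I → z ∈ I → x ≤ y → y ≤ z → y ∈ I

/-- A subset `I` of a poset is connected if any two points of `I` are joined by a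
zigzag path inside `I`. -/
def IsConnectedIn (I : Set P) : Prop :=
  ∀ x ∈ I, ∀ z ∈ I, ∃ (n : ℕ) (c : ℕ → P), (∀ i ≤ n, c i ∈ I) ∧ c 0 = x ∧ c n = z ∧
    ∀ i < n, c i ≤ c (i + 1) ∨ c (i + 1) ≤ c i

/-- An interval in a poset: nonempty, convex and connected. -/
def IsPosetInterval (I : Set P) : Prop :=
  I.Nonempty ∧ IsConvexIn I ∧ IsConnectedIn I

open Classical in
/-- The subspace of `k` used as the value of the constant module at `x`. -/
noncomputable def constSub (I : Set P) (x : P) : Submodule k k :=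
  if x ∈ I then ⊤ else ⊥

open Classical in
/-- The structure map of the constant module. -/
noncomputable def constMap (I : Set P) (x y : P) :
    constSub k I x →ₗ[k] constSub k I y :=
  LinearMap.codRestrict (constSub k I y)
    ((if y ∈ I then (LinearMap.id : k →ₗ[k] k) else 0).comp (constSub k I x).subtype)
    (fun c => by
      by_cases hy : y ∈ I
      · simp [constSub, hy]
      · simp only [if_neg hy, LinearMap.zero_comp, LinearMap.zero_apply]
        exact Submodule.zero_mem _)

open Classical in
/-- The constant (interval) module `M(I)` attached to a convex subset `I`. -/
noncomputable def constMod (I : Set P) (hI : IsConvexIn I) : PersMod.{u, v, u} k P where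
  space x := constSub k I x
  map {x y} _ := constMap k I x y
  map_id := fun x => by
    ext c
    by_cases hx : x ∈ I
    · simp [constMap, hx]
    · have hc : (c : k) = 0 := by
        have : (c : k) ∈ (if x ∈ I then (⊤ : Submodule k k) else ⊥) := c.2
        rw [if_neg hx] at this
        exact (Submodule.mem_bot k).1 this
      simp [constMap, hx, hc]
  map_comp := fun {x y z} hxy hyz => by
    ext c
    by_cases hz : z ∈ I
    · by_cases hy : y ∈ I
      · simp [constMap, hy, hz]
      · have hx : x ∉ I := fun hx => hy (hI hx hz hxy hyz)
        have hc : (c : k) = 0 := by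
          have : (c : k) ∈ (if x ∈ I then (⊤ : Submodule k k) else ⊥) := c.2
          rw [if_neg hx] at this
          exact (Submodule.mem_bot k).1 this
        simp [constMap, hy, hz, hc]
    · simp [constMap, hz]

/-- A submodule of a persistence module: a family of subspaces preserved by the
structure maps. -/
structure PersSubmod (V : PersMod.{u, v, w} k P) where
  carrier : ∀ x : P, Submodule k (V.space x)
  mapLe : ∀ {x y : P} (h : x ≤ y), ∀ v ∈ carrier x, V.map h v ∈ carrier y

/-- A submodule of a persistence module, viewed as a persistence module in its own
right. -/
def PersSubmod.toPersMod {V : PersMod.{u, v, w} k P} (U : PersSubmod k V) :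
    PersMod.{u, v, w} k P where
  space x := U.carrier x
  map {x y} h := (V.map h).restrict (U.mapLe h)
  map_id := fun x => by
    ext c
    simp [LinearMap.restrict_apply, V.map_id]
  map_comp := fun {x y z} hxy hyz => by
    ext c
    have := LinearMap.congr_fun (V.map_comp hxy hyz) (c : V.space x)
    simpa [LinearMap.restrict_apply] using this

/-- A persistence module is an interval module if it is isomorphic to a constant
module `M(I)` for some interval `I`. -/
def IsIntervalModule (V : PersMod.{u, v, w} k P) : Prop :=
  ∃ (I : Set P) (hI : IsPosetInterval I), Nonempty (PersIso k V (constMod k I hI.2.1))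

/-- `A` is an internal direct sum decomposition of `V`:
at each point the subspaces are independent and span everything. -/
def IsDecomp (V : PersMod.{u, v, w} k P) (A : Set (PersSubmod k V)) : Prop :=
  ∀ x : P, iSupIndep (fun U : A => (U : PersSubmod k V).carrier x) ∧
    ⨆ U : A, (U : PersSubmod k V).carrier x = ⊤

/-- An interval decomposition of `V`. -/
def IsIntervalDecomp (V : PersMod.{u, v, w} k P) (A : Set (PersSubmod k V)) : Prop :=
  IsDecomp k V A ∧ ∀ U ∈ A, IsIntervalModule k U.toPersMod

/-- `V` has an interval decomposition. -/
def HasIntervalDecomp (V : PersMod.{u, v, w} k P) : Prop :=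
  ∃ A : Set (PersSubmod k V), IsIntervalDecomp k V A

/-- A submodule of a persistence module is nonzero if it is nonzero at some point. -/
def PersSubmod.Nonzero {P : Type v} [PartialOrder P] {V : PersMod.{u, v, w} k P}
    (U : PersSubmod k V) : Prop :=
  ∃ x : P, U.carrier x ≠ ⊥

/-- `U` is a direct summand of the submodule `W` (inside `V`): there is a submodule
`Z` of `V` contained in `W` such that pointwise `W = U ⊕ Z`. -/
def PersSubmod.IsSummandIn {P : Type v} [PartialOrder P] {V : PersMod.{u, v, w} k P}
    (U W : PersSubmod k V) : Prop :=
  ∃ Z : PersSubmod k V, (∀ x : P, Z.carrier x ≤ W.carrier x) ∧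
    ∀ x : P, Disjoint (U.carrier x) (Z.carrier x) ∧
      U.carrier x ⊔ Z.carrier x = W.carrier x

/-- `U` is a direct summand of `V`. -/
def PersSubmod.IsSummand {P : Type v} [PartialOrder P] {V : PersMod.{u, v, w} k P}
    (U : PersSubmod k V) : Prop :=
  ∃ Z : PersSubmod k V, ∀ x : P, IsCompl (U.carrier x) (Z.carrier x)

/-! Apply Zorn's lemma to the pairs `(A, B)` with `A ⊆ E` pointwise independent and `B` a
complement of the sum of `A`, ordered by growing `A` and shrinking `B`. Along a chain the union
of the `A`s stays independent, independence being a finitary condition, and by pointwise finite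
dimensionality the `B`s stabilise at each point, so their intersection is still a complement.
At a maximal pair, a nonzero `B` is a summand of `V`, so the hypothesis yields `U ∈ E` with
`B = U ⊕ Z`, and `(A ∪ {U}, Z)` would be a larger pair; hence `B = 0`. -/

section Lattice

variable {α ι : Type*} [CompleteLattice α]

theorem iSupIndep_subtype_iff_supIndep [IsCompactlyGenerated α] {f : ι → α} {s : Set ι} :
    iSupIndep (fun i : s => f i) ↔ ∀ t : Finset ι, ↑t ⊆ s → t.SupIndep f := by
  refine ⟨fun h t hts => ?_, fun h => iSupIndep_iff_supIndep.2 fun t => ?_⟩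
  · exact iSupIndep_comp_coe_iff_supIndep.1
      (h.comp (f := Set.inclusion hts) (Set.inclusion_injective hts))
  · exact Finset.supIndep_map.1 (h (t.map (Function.Embedding.subtype _)) (by simp))

theorem iSupIndep_biUnion_of_directedOn [IsCompactlyGenerated α] {κ : Type*} {f : ι → α}
    {c : Set κ} {s : κ → Set ι} (hc : DirectedOn (fun p q => s p ⊆ s q) c) (hne : c.Nonempty)
    (h : ∀ p ∈ c, iSupIndep (fun i : s p => f i)) :
    iSupIndep (fun i : ↥(⋃ p ∈ c, s p) => f i) := by
  refine iSupIndep_subtype_iff_supIndep.2 fun t ht => ?_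
  obtain ⟨p, hp, htp⟩ := hc.exists_mem_subset_of_finset_subset_biUnion hne ht
  exact iSupIndep_subtype_iff_supIndep.1 (h p hp) t htp

theorem iSupIndep_insert_of_disjoint [IsCompactlyGenerated α] [IsModularLattice α]
    {f : ι → α} {s : Set ι} {i : ι} (hs : iSupIndep (fun j : s => f j))
    (hi : Disjoint (f i) (⨆ j ∈ s, f j)) :
    iSupIndep (fun j : ↥(insert i s) => f j) := by
  classical
  refine iSupIndep_subtype_iff_supIndep.2 fun t ht => ?_
  have hts : ↑(t.erase i) ⊆ s := fun j hj => by
    obtain ⟨hji, hjt⟩ := Finset.mem_erase.1 hj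
    simpa [hji] using ht hjt
  refine Finset.SupIndep.subset ?_ (Finset.insert_erase_subset i t)
  refine (iSupIndep_subtype_iff_supIndep.1 hs _ hts).insert (hi.mono_right ?_)
  rw [Finset.sup_eq_iSup]
  exact biSup_mono fun j hj => hts hj

theorem IsCompl.isCompl_sup_of_disjoint_of_sup_eq [IsModularLattice α] {a b u z : α}
    (hab : IsCompl a b) (huz : Disjoint u z) (hb : u ⊔ z = b) : IsCompl (u ⊔ a) z := by
  have hub : u ≤ b := hb ▸ le_sup_left
  have hzb : z ≤ b := hb ▸ le_sup_right
  refine ⟨disjoint_iff_inf_le.2 ?_, codisjoint_iff.2 ?_⟩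
  · calc (u ⊔ a) ⊓ z = (u ⊔ a) ⊓ b ⊓ z := by rw [inf_assoc, inf_eq_right.2 hzb]
      _ = u ⊓ z := by rw [sup_inf_assoc_of_le a hub, hab.inf_eq_bot, sup_bot_eq]
      _ ≤ ⊥ := huz.le_bot
  · rw [sup_right_comm, hb, sup_comm, hab.sup_eq_top]

theorem IsChain.exists_forall_le_of_wellFoundedLT [WellFoundedLT α] {s : Set α}
    (hs : IsChain (· ≤ ·) s) (hne : s.Nonempty) : ∃ a ∈ s, ∀ b ∈ s, a ≤ b := by
  obtain ⟨a, has, hmin⟩ := wellFounded_lt.has_min s hne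
  refine ⟨a, has, fun b hbs => ?_⟩
  rcases eq_or_ne a b with rfl | hab
  · exact le_rfl
  exact (hs has hbs hab).resolve_right fun hba => hmin b hbs (hba.lt_of_ne hab.symm)

end Lattice

section Decomposition

variable {k} {V : PersMod.{u, v, w} k P}

namespace PersSubmod

theorem carrier_le_comap (U : PersSubmod k V) {x y : P} (h : x ≤ y) :
    U.carrier x ≤ (U.carrier y).comap (V.map h) :=
  U.mapLe h

def sum (A : Set (PersSubmod k V)) : PersSubmod k V where
  carrier x := ⨆ U ∈ A, U.carrier x
  mapLe {x y} h _ hv := by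
    have : (⨆ U ∈ A, U.carrier x) ≤ (⨆ U ∈ A, U.carrier y).comap (V.map h) :=
      iSup₂_le fun U hU => (U.carrier_le_comap h).trans
        (Submodule.comap_mono (le_biSup (fun U : PersSubmod k V => U.carrier y) hU))
    exact this hv

def inter {ι : Type*} (W : ι → PersSubmod k V) : PersSubmod k V where
  carrier x := ⨅ i, (W i).carrier x
  mapLe h _ hv := (Submodule.comap_iInf (V.map h) _).ge
    ((le_iInf fun i => (iInf_le _ i).trans ((W i).carrier_le_comap h)) hv)

theorem inter_carrier_le {ι : Type*} (W : ι → PersSubmod k V) (i : ι) (x : P) :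
    (inter W).carrier x ≤ (W i).carrier x :=
  iInf_le (fun i => (W i).carrier x) i

theorem sum_insert_carrier (U : PersSubmod k V) (A : Set (PersSubmod k V)) (x : P) :
    (sum (insert U A)).carrier x = U.carrier x ⊔ (sum A).carrier x :=
  iSup_insert

theorem sum_biUnion_carrier {κ : Type*} (c : Set κ) (A : κ → Set (PersSubmod k V)) (x : P) :
    (sum (⋃ p ∈ c, A p)).carrier x = ⨆ p ∈ c, (sum (A p)).carrier x := by
  simp only [sum, Set.biUnion_eq_iUnion, iSup_iUnion, iSup_subtype']

theorem sum_mono {A A' : Set (PersSubmod k V)} (h : A ⊆ A') (x : P) :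
    (sum A).carrier x ≤ (sum A').carrier x :=
  biSup_mono h

end PersSubmod

variable (E : Set (PersSubmod k V))

structure PartialDecomp where
  summands : Set (PersSubmod k V)
  subset : summands ⊆ E
  compl : PersSubmod k V
  indep : ∀ x : P, iSupIndep fun U : summands => U.1.carrier x
  isCompl : ∀ x : P, IsCompl ((PersSubmod.sum summands).carrier x) (compl.carrier x)

namespace PartialDecomp

variable {E}

instance : Preorder (PartialDecomp E) where
  le p q := p.summands ⊆ q.summands ∧ ∀ x, q.compl.carrier x ≤ p.compl.carrier x
  le_refl _ := ⟨subset_rfl, fun _ => le_rfl⟩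
  le_trans _ _ _ hpq hqr := ⟨hpq.1.trans hqr.1, fun x => (hqr.2 x).trans (hpq.2 x)⟩

instance : Nonempty (PartialDecomp E) :=
  ⟨{ summands := ∅
     subset := Set.empty_subset E
     compl := ⟨fun _ => ⊤, fun _ _ _ => Submodule.mem_top⟩
     indep := fun _ => iSupIndep_subsingleton _
     isCompl := fun _ => by simpa [PersSubmod.sum] using isCompl_bot_top }⟩

theorem isSummand_compl (p : PartialDecomp E) : p.compl.IsSummand k :=
  ⟨PersSubmod.sum p.summands, fun x => (p.isCompl x).symm⟩

theorem isCompl_sum_biUnion_inter {c : Set (PartialDecomp E)} (hc : IsChain (· ≤ ·) c)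
    (hne : c.Nonempty) (x : P) [FiniteDimensional k (V.space x)] :
    IsCompl ((PersSubmod.sum (⋃ p ∈ c, p.summands)).carrier x)
      ((PersSubmod.inter fun p : c => p.1.compl).carrier x) := by
  obtain ⟨_, ⟨p₀, hp₀, rfl⟩, hp₀min⟩ := (hc.symm.image_of_map_rel _ (· ≤ ·)
    (fun p : PartialDecomp E => p.compl.carrier x) fun _ _ h => h.2 x
    ).exists_forall_le_of_wellFoundedLT (hne.image _)
  constructor
  · rw [PersSubmod.sum_biUnion_carrier, ← sSup_image]
    refine ((hc.image_of_map_rel _ (· ≤ ·) _ fun _ _ h => PersSubmod.sum_mono h.1 x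
      ).directedOn.disjoint_sSup_left).2 ?_
    rintro _ ⟨p, hp, rfl⟩
    exact (p.isCompl x).disjoint.mono_right
      (PersSubmod.inter_carrier_le (fun q : c => q.1.compl) ⟨p, hp⟩ x)
  · have : p₀.compl.carrier x ≤ (PersSubmod.inter fun p : c => p.1.compl).carrier x :=
      le_iInf fun q => hp₀min _ ⟨q, q.2, rfl⟩
    exact (p₀.isCompl x).codisjoint.mono
      (PersSubmod.sum_mono (Set.subset_biUnion_of_mem hp₀) x) this

def ofChain (hfd : ∀ x : P, FiniteDimensional k (V.space x)) {c : Set (PartialDecomp E)}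
    (hc : IsChain (· ≤ ·) c) (hne : c.Nonempty) : PartialDecomp E where
  summands := ⋃ p ∈ c, p.summands
  subset := Set.iUnion₂_subset fun p _ => p.subset
  compl := PersSubmod.inter fun p : c => p.1.compl
  indep x := iSupIndep_biUnion_of_directedOn (f := fun W : PersSubmod k V => W.carrier x)
    (hc.directedOn.mono fun _ _ h => h.1) hne fun p _ => p.indep x
  isCompl x := have := hfd x; isCompl_sum_biUnion_inter hc hne x

theorem le_ofChain (hfd : ∀ x : P, FiniteDimensional k (V.space x)) {c : Set (PartialDecomp E)}
    (hc : IsChain (· ≤ ·) c) (hne : c.Nonempty) {p : PartialDecomp E} (hp : p ∈ c) :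
    p ≤ ofChain hfd hc hne :=
  ⟨Set.subset_biUnion_of_mem (u := summands) hp,
    PersSubmod.inter_carrier_le (fun q : c => q.1.compl) ⟨p, hp⟩⟩

theorem notMem_summands_of_le_compl (p : PartialDecomp E) {U : PersSubmod k V}
    (hU : U.Nonzero k) (hUB : ∀ x, U.carrier x ≤ p.compl.carrier x) : U ∉ p.summands := by
  intro hUA
  obtain ⟨x, hx⟩ := hU
  exact hx (disjoint_self.1 ((p.isCompl x).disjoint.mono
    (le_biSup (fun U : PersSubmod k V => U.carrier x) hUA) (hUB x)))

def extend (p : PartialDecomp E) {U Z : PersSubmod k V} (hU : U ∈ E)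
    (hUZ : ∀ x, Disjoint (U.carrier x) (Z.carrier x) ∧
      U.carrier x ⊔ Z.carrier x = p.compl.carrier x) : PartialDecomp E where
  summands := insert U p.summands
  subset := Set.insert_subset hU p.subset
  compl := Z
  indep x := iSupIndep_insert_of_disjoint (f := fun W : PersSubmod k V => W.carrier x)
    (p.indep x) ((p.isCompl x).disjoint.symm.mono_left ((hUZ x).2 ▸ le_sup_left))
  isCompl x := by
    rw [PersSubmod.sum_insert_carrier]
    exact (p.isCompl x).isCompl_sup_of_disjoint_of_sup_eq (hUZ x).1 (hUZ x).2

theorem le_extend (p : PartialDecomp E) {U Z : PersSubmod k V} (hU : U ∈ E)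
    (hUZ : ∀ x, Disjoint (U.carrier x) (Z.carrier x) ∧
      U.carrier x ⊔ Z.carrier x = p.compl.carrier x) : p ≤ p.extend hU hUZ :=
  ⟨Set.subset_insert _ _, fun x => (hUZ x).2 ▸ le_sup_right⟩

theorem not_isMax_of_isSummandIn (hE : ∀ U ∈ E, U.Nonzero k) (p : PartialDecomp E)
    {U : PersSubmod k V} (hU : U ∈ E) (hUp : U.IsSummandIn k p.compl) : ¬IsMax p := by
  obtain ⟨Z, -, hUZ⟩ := hUp
  intro hmax
  have hle := hmax (p.le_extend hU hUZ)
  exact p.notMem_summands_of_le_compl (hE U hU) (fun x => (hUZ x).2 ▸ le_sup_left)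
    (hle.1 (Set.mem_insert U _))

end PartialDecomp

end Decomposition

/-- Decomposition criterion: if `E` is a set of nonzero submodules of a pointwise
finite dimensional persistence module `V` such that every nonzero direct summand `W`
of `V` contains a member of `E` which is a direct summand of `W`, then some subset
of `E` gives an internal direct sum decomposition of `V`. -/
theorem decomp_criterion (P : Type v) [PartialOrder P]
    (V : PersMod.{u, v, w} k P) (hfd : ∀ x : P, FiniteDimensional k (V.space x))
    (E : Set (PersSubmod k V))
    (hE : ∀ U ∈ E, U.Nonzero k)
    (hyp : ∀ W : PersSubmod k V, W.Nonzero k → W.IsSummand k →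
      ∃ U ∈ E, (∀ x : P, U.carrier x ≤ W.carrier x) ∧ U.IsSummandIn k W) :
    ∃ A ⊆ E, IsDecomp k V A := by
  obtain ⟨m, hm⟩ := zorn_le_nonempty (α := PartialDecomp E) fun c hc hne =>
    ⟨.ofChain hfd hc hne, fun _ => PartialDecomp.le_ofChain hfd hc hne⟩
  have hcompl : ∀ x, m.compl.carrier x = ⊥ := by
    by_contra! h
    obtain ⟨U, hU, -, hsummand⟩ := hyp m.compl h m.isSummand_compl
    exact m.not_isMax_of_isSummandIn hE hU hsummand hm
  refine ⟨m.summands, m.subset, fun x => ⟨m.indep x, ?_⟩⟩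
  rw [iSup_subtype'' m.summands fun U => U.carrier x]
  exact eq_top_of_isCompl_bot (hcompl x ▸ m.isCompl x)
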